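/- For every instance in which each project valuation v_k is monotone XoS (with v_k(∅)=0), there exist an allocation S with SW(S) = OPT and a payment vector p̄ such that (S, p̄) is core stable. That is, a (1,1)-core stable solution exists: a fully budget-balanced, fully stable solution at a welfare-maximizing allocation. -/

import Mathlib

/-!
Take a welfare-maximizing allocation `S` and, for every project `k`, an additive clause of `v k`
attaining `v k (S k)`. Pay each agent what the clause of its own project assigns to it; this is
budget balanced, and every project values each subset of its agents at least at their payments,
since a clause is a lower bound for its valuation. If some coalition `S k ∪ T` were underpaid,
moving `T` into project `k` would cost every other project at most the payments of the agents it
gives up, while project `k` gains more than the payments of the agents it receives, contradicting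
the optimality of `S`.
-/

open Finset

section Allocation

variable {𝒩 P : Type*} [DecidableEq 𝒩]

def moveInto [DecidableEq P] (S : P → Finset 𝒩) (k : P) (T : Finset 𝒩) : P → Finset 𝒩 :=
  fun l => if l = k then S k ∪ T else S l \ T

@[simp]
theorem moveInto_self [DecidableEq P] (S : P → Finset 𝒩) (k : P) (T : Finset 𝒩) :
    moveInto S k T k = S k ∪ T :=
  if_pos rfl

theorem moveInto_of_ne [DecidableEq P] {S : P → Finset 𝒩} {k l : P} (T : Finset 𝒩) (hl : l ≠ k) :
    moveInto S k T l = S l \ T :=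
  if_neg hl

theorem mem_moveInto [DecidableEq P] {S : P → Finset 𝒩} {k l : P} {T : Finset 𝒩} {i : 𝒩} :
    i ∈ moveInto S k T l ↔ i ∈ T ∧ l = k ∨ i ∉ T ∧ i ∈ S l := by
  unfold moveInto
  split_ifs with hl <;> by_cases hi : i ∈ T <;> simp [hl, hi]

variable [Fintype 𝒩] [Fintype P]

def IsAllocation (S : P → Finset 𝒩) : Prop :=
  (∀ k l, k ≠ l → Disjoint (S k) (S l)) ∧ univ.biUnion S = univ

theorem isAllocation_iff {S : P → Finset 𝒩} : IsAllocation S ↔ ∀ i, ∃! k, i ∈ S k := by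
  refine ⟨fun ⟨hdisj, hcov⟩ i => ?_, fun h => ⟨fun k l hkl => ?_, ?_⟩⟩
  · obtain ⟨k, -, hk⟩ := mem_biUnion.1 (hcov ▸ mem_univ i)
    exact ⟨k, hk, fun l hl => by_contra fun hlk => disjoint_left.1 (hdisj l k hlk) hl hk⟩
  · exact disjoint_left.2 fun i hk hl => hkl ((h i).unique hk hl)
  · exact eq_univ_of_forall fun i => mem_biUnion.2 ⟨_, mem_univ _, (h i).exists.choose_spec⟩

theorem isAllocation_ite_univ [DecidableEq P] (k₀ : P) :
    IsAllocation fun k => if k = k₀ then (univ : Finset 𝒩) else ∅ :=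
  isAllocation_iff.2 fun _ => ⟨k₀, by simp, fun k hk => by_contra fun h => by simp [h] at hk⟩

theorem exists_isAllocation_forall_le [Nonempty P] (W : (P → Finset 𝒩) → ℝ) :
    ∃ S, IsAllocation S ∧ ∀ S', IsAllocation S' → W S' ≤ W S := by
  classical
  obtain ⟨k₀⟩ := ‹Nonempty P›
  obtain ⟨S, hS, hmax⟩ := exists_max_image (univ.filter IsAllocation) W
    ⟨_, mem_filter.2 ⟨mem_univ _, isAllocation_ite_univ k₀⟩⟩
  exact ⟨S, (mem_filter.1 hS).2, fun S' hS' => hmax S' (mem_filter.2 ⟨mem_univ _, hS'⟩)⟩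

theorem IsAllocation.sum_sum_eq {S : P → Finset 𝒩} (hS : IsAllocation S) (f : 𝒩 → ℝ) :
    ∑ k, ∑ i ∈ S k, f i = ∑ i, f i := by
  rw [← sum_biUnion fun k _ l _ hkl => hS.1 k l hkl, hS.2]

theorem IsAllocation.moveInto [DecidableEq P] {S : P → Finset 𝒩} (hS : IsAllocation S) (k : P)
    (T : Finset 𝒩) : IsAllocation (moveInto S k T) := by
  refine isAllocation_iff.2 fun i => ?_
  by_cases hi : i ∈ T
  · simp [mem_moveInto, hi]
  · simpa [mem_moveInto, hi] using isAllocation_iff.1 hS i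

theorem IsAllocation.apply_le_sum_of_sum_le {v : P → Finset 𝒩 → ℝ} {S : P → Finset 𝒩}
    {p : 𝒩 → ℝ} (hS : IsAllocation S) (k : P) (hW : ∑ l, v l (S l) ≤ ∑ i, p i)
    (hle : ∀ l ≠ k, ∑ i ∈ S l, p i ≤ v l (S l)) : v k (S k) ≤ ∑ i ∈ S k, p i := by
  classical
  rw [← hS.sum_sum_eq, ← add_sum_erase _ _ (mem_univ k), ← add_sum_erase _ _ (mem_univ k)] at hW
  have := sum_le_sum (s := univ.erase k) fun l hl => hle l (ne_of_mem_erase hl)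
  linarith

theorem IsAllocation.le_sum_union_of_forall_le {v : P → Finset 𝒩 → ℝ} {S : P → Finset 𝒩}
    {p : 𝒩 → ℝ} (hS : IsAllocation S)
    (hmax : ∀ S', IsAllocation S' → ∑ k, v k (S' k) ≤ ∑ k, v k (S k))
    (hbudget : ∑ i, p i = ∑ k, v k (S k)) (hsub : ∀ l, ∀ X ⊆ S l, ∑ i ∈ X, p i ≤ v l X)
    (k : P) (T : Finset 𝒩) : v k (S k ∪ T) ≤ ∑ i ∈ S k ∪ T, p i := by
  classical
  have hS' := hS.moveInto k T
  have key := hS'.apply_le_sum_of_sum_le k ((hmax _ hS').trans hbudget.ge) fun l hl => by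
    simpa [moveInto_of_ne T hl] using hsub l _ sdiff_subset
  simpa using key

end Allocation

section Payment

variable {𝒩 P : Type*} [DecidableEq 𝒩] [Fintype P]

def glue (S : P → Finset 𝒩) (c : P → 𝒩 → ℝ) (i : 𝒩) : ℝ :=
  ∑ k, if i ∈ S k then c k i else 0

theorem glue_eq_of_mem {S : P → Finset 𝒩} (hS : ∀ k l, k ≠ l → Disjoint (S k) (S l))
    (c : P → 𝒩 → ℝ) {k : P} {i : 𝒩} (hi : i ∈ S k) : glue S c i = c k i :=
  (sum_eq_single_of_mem k (mem_univ k) fun l _ hlk => if_neg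
    (disjoint_left.1 (hS k l hlk.symm) hi)).trans (if_pos hi)

theorem glue_nonneg {S : P → Finset 𝒩} {c : P → 𝒩 → ℝ} (hc : ∀ k i, 0 ≤ c k i) (i : 𝒩) :
    0 ≤ glue S c i :=
  sum_nonneg fun k _ => by split_ifs <;> simp [hc]

end Payment

theorem exists_clause_le_eq {𝒩 ι : Type*} [Fintype ι] [Nonempty ι] {v : Finset 𝒩 → ℝ}
    {a : ι → 𝒩 → ℝ} (hv : ∀ T, v T = univ.sup' univ_nonempty fun j => ∑ i ∈ T, a j i)
    (A : Finset 𝒩) : ∃ j, (∀ T, ∑ i ∈ T, a j i ≤ v T) ∧ ∑ i ∈ A, a j i = v A := by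
  obtain ⟨j, -, hj⟩ := exists_mem_eq_sup' univ_nonempty fun j => ∑ i ∈ A, a j i
  exact ⟨j, fun T => (hv T).symm ▸ le_sup' (fun j => ∑ i ∈ T, a j i) (mem_univ j),
    ((hv A).trans hj).symm⟩

theorem stmt9_general {𝒩 P : Type*} [Fintype 𝒩] [DecidableEq 𝒩] [Fintype P] [Nonempty P]
    (v : P → Finset 𝒩 → ℝ)
    -- each v k is XoS: a pointwise maximum of finitely many nonnegative additive clauses
    (hxos : ∀ k, ∃ (r : ℕ) (a : Fin (r + 1) → 𝒩 → ℝ),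
      (∀ j i, 0 ≤ a j i) ∧
      (∀ T : Finset 𝒩,
        v k T = (Finset.univ : Finset (Fin (r + 1))).sup' Finset.univ_nonempty
          (fun j => ∑ i ∈ T, a j i))) :
    ∃ (S : P → Finset 𝒩) (pbar : 𝒩 → ℝ),
      -- S is an allocation
      (∀ k l, k ≠ l → Disjoint (S k) (S l)) ∧
      Finset.univ.biUnion S = Finset.univ ∧
      -- S is welfare maximizing: SW(S) = OPT
      (∀ S' : P → Finset 𝒩,
        (∀ k l, k ≠ l → Disjoint (S' k) (S' l)) →
        Finset.univ.biUnion S' = Finset.univ →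
        ∑ k, v k (S' k) ≤ ∑ k, v k (S k)) ∧
      -- p̄ is a payment vector
      (∀ i, 0 ≤ pbar i) ∧
      -- stability
      (∀ k (T : Finset 𝒩), v k (S k ∪ T) ≤ ∑ i ∈ S k ∪ T, pbar i) ∧
      -- budget balance
      (∑ i, pbar i = ∑ k, v k (S k)) := by
  obtain ⟨S, hS, hmax⟩ := exists_isAllocation_forall_le fun S : P → Finset 𝒩 => ∑ k, v k (S k)
  have hclause : ∀ k, ∃ c : 𝒩 → ℝ, (∀ i, 0 ≤ c i) ∧ (∀ T, ∑ i ∈ T, c i ≤ v k T) ∧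
      ∑ i ∈ S k, c i = v k (S k) := fun k => by
    obtain ⟨r, a, ha, hv⟩ := hxos k
    obtain ⟨j, hj⟩ := exists_clause_le_eq hv (S k)
    exact ⟨a j, ha j, hj⟩
  choose c hc_nonneg hc_le hc_eq using hclause
  have hglue : ∀ l, ∀ X ⊆ S l, ∑ i ∈ X, glue S c i = ∑ i ∈ X, c l i := fun l X hX =>
    sum_congr rfl fun i hi => glue_eq_of_mem hS.1 c (hX hi)
  have hbudget : ∑ i, glue S c i = ∑ k, v k (S k) := by
    rw [← hS.sum_sum_eq]
    exact sum_congr rfl fun k _ => (hglue k _ subset_rfl).trans (hc_eq k)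
  refine ⟨S, glue S c, hS.1, hS.2, fun S' h₁ h₂ => hmax S' ⟨h₁, h₂⟩, glue_nonneg hc_nonneg,
    hS.le_sum_union_of_forall_le hmax hbudget fun l X hX => ?_, hbudget⟩
  exact (hglue l X hX).trans_le (hc_le l X)

/-- For every instance with monotone XoS (fractionally subadditive) project valuations
there exists a `(1,1)`-core stable solution: a welfare-maximizing allocation `S`
together with payments `p̄` that are stable and fully budget-balanced. -/
theorem stmt9 {𝒩 P : Type*} [Fintype 𝒩] [DecidableEq 𝒩] [Fintype P] [Nonempty P]
    (v : P → Finset 𝒩 → ℝ)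
    (hzero : ∀ k, v k ∅ = 0)
    (hnonneg : ∀ k (T : Finset 𝒩), 0 ≤ v k T)
    (hmono : ∀ k (A B : Finset 𝒩), A ⊆ B → v k A ≤ v k B)
    -- each v k is XoS: a pointwise maximum of finitely many nonnegative additive clauses
    (hxos : ∀ k, ∃ (r : ℕ) (a : Fin (r + 1) → 𝒩 → ℝ),
      (∀ j i, 0 ≤ a j i) ∧
      (∀ T : Finset 𝒩,
        v k T = (Finset.univ : Finset (Fin (r + 1))).sup' Finset.univ_nonempty
          (fun j => ∑ i ∈ T, a j i))) :
    ∃ (S : P → Finset 𝒩) (pbar : 𝒩 → ℝ),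
      -- S is an allocation
      (∀ k l, k ≠ l → Disjoint (S k) (S l)) ∧
      Finset.univ.biUnion S = Finset.univ ∧
      -- S is welfare maximizing: SW(S) = OPT
      (∀ S' : P → Finset 𝒩,
        (∀ k l, k ≠ l → Disjoint (S' k) (S' l)) →
        Finset.univ.biUnion S' = Finset.univ →
        ∑ k, v k (S' k) ≤ ∑ k, v k (S k)) ∧
      -- p̄ is a payment vector
      (∀ i, 0 ≤ pbar i) ∧
      -- stability
      (∀ k (T : Finset 𝒩), v k (S k ∪ T) ≤ ∑ i ∈ S k ∪ T, pbar i) ∧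
      -- budget balance
      (∑ i, pbar i = ∑ k, v k (S k)) :=
  stmt9_general v hxos
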